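/- Let (M,∘) be a monoid. Define ν₀ = {(a,b) ∈ M × M : ∃c ∈ M, c∘a = c∘b}, ν₁ the transitive closure of ν₀, and for m ≥ 1: ν_{2m} = {(c∘a, c∘b) : c ∈ M, (a,b) ∈ ν_{2m-1}} ∪ {(a,b) : ∃c ∈ M, (c∘a, c∘b) ∈ ν_{2m-1}}, and ν_{2m+1} the transitive closure of ν_{2m}. Set ν' = ⋃_{n≥0} ν_n. Then ν' is a congruence on M, the quotient monoid M/ν' is left cancellative, and ν' equals the least congruence ν on M whose quotient is left cancellative. -/
import Mathlib


open scoped Classical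

/-- The relations `ν₀, ν₁, ν₂, …` on a monoid `M`: `ν₀ = {(a,b) : ∃ c, c∘a = c∘b}`,
`ν_{2m+1}` is the transitive closure of `ν_{2m}`, and
`ν_{2m+2} = {(c∘a, c∘b) : (a,b) ∈ ν_{2m+1}} ∪ {(a,b) : ∃ c, (c∘a, c∘b) ∈ ν_{2m+1}}`. -/
def nuN {M : Type*} [Monoid M] : ℕ → M → M → Prop
  | 0 => fun a b => ∃ c : M, c * a = c * b
  | n + 1 =>
    if n % 2 = 0 then Relation.TransGen (nuN n)
    else fun u v =>
      (∃ c a b : M, nuN n a b ∧ u = c * a ∧ v = c * b) ∨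
      (∃ c : M, nuN n (c * u) (c * v))

/-- `ν' = ⋃_{n ≥ 0} ν_n`. -/
def nuRel {M : Type*} [Monoid M] : M → M → Prop := fun a b => ∃ n, nuN n a b

section Aux

variable {M : Type*} [Monoid M]

lemma nuN_succ_even {n : ℕ} (hn : n % 2 = 0) :
    (nuN (n+1) : M → M → Prop) = Relation.TransGen (nuN n) := by
  simp [nuN, hn]

lemma nuN_succ_odd {n : ℕ} (hn : n % 2 = 1) :
    (nuN (n+1) : M → M → Prop) = fun u v =>
      (∃ c a b : M, nuN n a b ∧ u = c * a ∧ v = c * b) ∨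
      (∃ c : M, nuN n (c * u) (c * v)) := by
  simp [nuN, hn]

lemma nuN_mono_succ (n : ℕ) {a b : M} (h : nuN n a b) : nuN (n+1) a b := by
  rcases Nat.even_or_odd n with he | ho
  · rw [nuN_succ_even (Nat.even_iff.mp he)]; exact .single h
  · rw [nuN_succ_odd (Nat.odd_iff.mp ho)]
    exact Or.inr ⟨1, by simpa using h⟩

lemma nuN_mono {n m : ℕ} (hnm : n ≤ m) {a b : M} (h : nuN n a b) : nuN m a b := by
  induction hnm with
  | refl => exact h
  | step _ ih => exact nuN_mono_succ _ ih

lemma nuN_refl (n : ℕ) (a : M) : nuN n a a :=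
  nuN_mono (Nat.zero_le n) ⟨1, rfl⟩

lemma nuN_symm : ∀ n : ℕ, ∀ {a b : M}, nuN n a b → nuN n b a := by
  intro n
  induction n with
  | zero => rintro a b ⟨c, hc⟩; exact ⟨c, hc.symm⟩
  | succ n ih =>
    rcases Nat.even_or_odd n with he | ho
    · rw [nuN_succ_even (Nat.even_iff.mp he)]
      intro a b h
      induction h with
      | single h => exact .single (ih h)
      | tail _ h ih2 => exact (Relation.TransGen.single (ih h)).trans ih2
    · rw [nuN_succ_odd (Nat.odd_iff.mp ho)]
      rintro a b (⟨c, x, y, hxy, rfl, rfl⟩ | ⟨c, h⟩)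
      · exact Or.inl ⟨c, y, x, ih hxy, rfl, rfl⟩
      · exact Or.inr ⟨c, ih h⟩

lemma nuRel_trans {a b c : M} (h1 : nuRel a b) (h2 : nuRel b c) : nuRel a c := by
  obtain ⟨n, h1⟩ := h1
  obtain ⟨m, h2⟩ := h2
  refine ⟨2 * max n m + 1, ?_⟩
  have hk : (2 * max n m) % 2 = 0 := by omega
  rw [nuN_succ_even hk]
  have h1' : nuN (2 * max n m) a b := nuN_mono (by omega) h1
  have h2' : nuN (2 * max n m) b c := nuN_mono (by omega) h2
  exact (Relation.TransGen.single h1').tail h2'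

lemma nuRel_mul_left (c : M) {a b : M} (h : nuRel a b) : nuRel (c * a) (c * b) := by
  obtain ⟨n, h⟩ := h
  refine ⟨(2 * n + 1) + 1, ?_⟩
  rw [nuN_succ_odd (by omega)]
  exact Or.inl ⟨c, a, b, nuN_mono (by omega) h, rfl, rfl⟩

lemma nuRel_cancel {c a b : M} (h : nuRel (c * a) (c * b)) : nuRel a b := by
  obtain ⟨n, h⟩ := h
  refine ⟨(2 * n + 1) + 1, ?_⟩
  rw [nuN_succ_odd (by omega)]
  exact Or.inr ⟨c, nuN_mono (by omega) h⟩

lemma nuRel_mul_right (w : M) : ∀ n : ℕ, ∀ a b : M, nuN n a b → nuRel (a * w) (b * w) := by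
  intro n
  induction n with
  | zero =>
    rintro a b ⟨c, hc⟩
    exact ⟨0, ⟨c, by rw [← mul_assoc, ← mul_assoc, hc]⟩⟩
  | succ n ih =>
    rcases Nat.even_or_odd n with he | ho
    · intro a b h
      rw [nuN_succ_even (Nat.even_iff.mp he)] at h
      induction h with
      | single h => exact ih _ _ h
      | tail _ h ih2 => exact nuRel_trans ih2 (ih _ _ h)
    · intro a b h
      rw [nuN_succ_odd (Nat.odd_iff.mp ho)] at h
      rcases h with ⟨c, x, y, hxy, rfl, rfl⟩ | ⟨c, h⟩
      · have := nuRel_mul_left c (ih _ _ hxy)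
        rwa [← mul_assoc, ← mul_assoc] at this
      · have := ih _ _ h
        rw [mul_assoc, mul_assoc] at this
        exact nuRel_cancel this

lemma nuRel_mul_right' (w : M) {a b : M} (h : nuRel a b) : nuRel (a * w) (b * w) := by
  obtain ⟨n, h⟩ := h
  exact nuRel_mul_right w n a b h

/-- The congruence whose underlying relation is `nuRel`. -/
def nuCon : Con M where
  r := nuRel
  iseqv := ⟨fun a => ⟨0, 1, rfl⟩, fun ⟨n, h⟩ => ⟨n, nuN_symm n h⟩, nuRel_trans⟩
  mul' := fun {a b x y} h1 h2 =>
    nuRel_trans (nuRel_mul_right' x h1) (nuRel_mul_left b h2)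

lemma nuN_le (d : Con M) (hd : ∀ z a b : M, d (z * a) (z * b) → d a b) :
    ∀ n : ℕ, ∀ a b : M, nuN n a b → d a b := by
  intro n
  induction n with
  | zero =>
    rintro a b ⟨c, hc⟩
    exact hd c a b (hc ▸ d.refl _)
  | succ n ih =>
    rcases Nat.even_or_odd n with he | ho
    · intro a b h
      rw [nuN_succ_even (Nat.even_iff.mp he)] at h
      induction h with
      | single h => exact ih _ _ h
      | tail _ h ih2 => exact d.trans ih2 (ih _ _ h)
    · intro a b h
      rw [nuN_succ_odd (Nat.odd_iff.mp ho)] at h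
      rcases h with ⟨c, x, y, hxy, rfl, rfl⟩ | ⟨c, h⟩
      · exact d.mul (d.refl c) (ih _ _ hxy)
      · exact hd c a b (ih _ _ h)

end Aux

/-- `ν'` is a congruence on `M`, the quotient `M/ν'` is left cancellative, and
`ν'` is the least congruence on `M` with left cancellative quotient. -/
theorem nuRel_isLeast_leftCancel (M : Type*) [Monoid M] :
    ∃ c : Con M, (∀ a b : M, c a b ↔ nuRel a b) ∧
      (∀ z a b : M, c (z * a) (z * b) → c a b) ∧
      (∀ d : Con M, (∀ z a b : M, d (z * a) (z * b) → d a b) → c ≤ d) := by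
  refine ⟨nuCon, fun a b => Iff.rfl, fun z a b h => nuRel_cancel h, fun d hd => ?_⟩
  intro x y h
  obtain ⟨n, h⟩ := h
  exact nuN_le d hd n x y h
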